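/- arXiv:2305.04803 — 2 statements merged into one kernel-verified Lean document; each statement's English description precedes it below -/
import Mathlib

section
/- Let Λ and H be countable discrete groups with H finite, let (K_Λ, β_Λ) be a Bohr compactification of Λ, and let (K_H, β_H) be a Bohr compactification of H. Form the semidirect product (∏_{h∈H} K_Λ) ⋊ K_H, where K_H acts by permuting coordinates through the isomorphism β_H (H being finite, β_H is an isomorphism H ≅ K_H). Then this semidirect product, together with the homomorphism Λ ≀ H → (∏_{h∈H} K_Λ) ⋊ K_H sending (f, h) to ((β_Λ(f(h')))_{h'∈H}, β_H(h)), is a Bohr compactification of the wreath product Λ ≀ H. The analogous statement holds for profinite completions. -/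
universe u v w

/-- `(K, β)` is a Bohr compactification of `G`. -/
def IsBohrCompactification (G : Type u) [Group G] [TopologicalSpace G]
    (K : Type v) [Group K] [TopologicalSpace K] (β : G →* K) : Prop :=
  IsTopologicalGroup K ∧ CompactSpace K ∧ T2Space K ∧ Continuous β ∧ DenseRange β ∧
    ∀ (L : Type w) [Group L] [TopologicalSpace L] [IsTopologicalGroup L] [CompactSpace L]
      [T2Space L] (α : G →* L), Continuous α →
        ∃ α' : K →* L, Continuous α' ∧ α = α'.comp β

/-- `(K, α)` is a profinite completion of `G`. -/
def IsProfiniteCompletion (G : Type u) [Group G] [TopologicalSpace G]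
    (K : Type v) [Group K] [TopologicalSpace K] (α : G →* K) : Prop :=
  IsTopologicalGroup K ∧ CompactSpace K ∧ T2Space K ∧ TotallyDisconnectedSpace K ∧
    Continuous α ∧ DenseRange α ∧
    ∀ (L : Type w) [Group L] [TopologicalSpace L] [IsTopologicalGroup L] [CompactSpace L]
      [T2Space L] [TotallyDisconnectedSpace L] (γ : G →* L), Continuous γ →
        ∃ γ' : K →* L, Continuous γ' ∧ γ = γ'.comp α

/-- The restricted direct product `⊕_{h ∈ H} Λ`: finitely supported functions `H → Λ`. -/
def restrictedProduct (H : Type u) (Λ : Type v) [Group Λ] : Subgroup (H → Λ) where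
  carrier := {f | (Function.mulSupport f).Finite}
  one_mem' := by simp
  mul_mem' := by
    intro f g hf hg
    exact Set.Finite.subset (hf.union hg) (Function.mulSupport_mul f g)
  inv_mem' := by
    intro f hf
    simpa using hf

/-- The shift of a finitely supported function: `(h · f)(h') = f (h⁻¹ h')`. -/
def shiftEquiv (Λ : Type v) (H : Type u) [Group Λ] [Group H] (h : H) :
    restrictedProduct H Λ ≃* restrictedProduct H Λ where
  toFun f := ⟨fun h' => (f : H → Λ) (h⁻¹ * h'), by
    refine Set.Finite.subset (f.2.image (h * ·)) ?_
    intro h' hh'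
    exact ⟨h⁻¹ * h', hh', by group⟩⟩
  invFun f := ⟨fun h' => (f : H → Λ) (h * h'), by
    refine Set.Finite.subset (f.2.image (h⁻¹ * ·)) ?_
    intro h' hh'
    exact ⟨h * h', hh', by group⟩⟩
  left_inv f := by ext h'; simp
  right_inv f := by ext h'; simp
  map_mul' f g := by ext h'; simp [Subgroup.coe_mul]

/-- The shift action of `H` on `⊕_{h ∈ H} Λ`. -/
def shiftAut (Λ : Type v) (H : Type u) [Group Λ] [Group H] :
    H →* MulAut (restrictedProduct H Λ) where
  toFun h := shiftEquiv Λ H h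
  map_one' := by
    ext f h'
    simp [shiftEquiv]
  map_mul' h₁ h₂ := by
    ext f h'
    simp [shiftEquiv, mul_assoc]

/-- The wreath product `Λ ≀ H`. -/
def Wreath (Λ : Type v) (H : Type u) [Group Λ] [Group H] : Type (max u v) :=
  restrictedProduct H Λ ⋊[shiftAut Λ H] H

instance (Λ : Type v) (H : Type u) [Group Λ] [Group H] : Group (Wreath Λ H) :=
  inferInstanceAs (Group (restrictedProduct H Λ ⋊[shiftAut Λ H] H))

instance (Λ : Type v) (H : Type u) [Group Λ] [Group H] : TopologicalSpace (Wreath Λ H) := ⊥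

instance (Λ : Type v) (H : Type u) [Group Λ] [Group H] : DiscreteTopology (Wreath Λ H) :=
  ⟨rfl⟩

/-- The permutation action `(h · F)(h') = F (h⁻¹ h')` of `H` on a full direct product. -/
def permEquiv (K_Λ : Type v) (H : Type u) [Group K_Λ] [Group H] (h : H) :
    (H → K_Λ) ≃* (H → K_Λ) where
  toFun F := fun h' => F (h⁻¹ * h')
  invFun F := fun h' => F (h * h')
  left_inv F := by funext h'; simp
  right_inv F := by funext h'; simp
  map_mul' F G := rfl

/-- The permutation action of `H` on `∏_{h ∈ H} K_Λ`. -/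
def permAut (K_Λ : Type v) (H : Type u) [Group K_Λ] [Group H] : H →* MulAut (H → K_Λ) where
  toFun h := permEquiv K_Λ H h
  map_one' := by
    ext F h'
    simp [permEquiv]
  map_mul' h₁ h₂ := by
    ext F h'
    simp [permEquiv, mul_assoc]

/-- The coordinatewise extension of `βΛ : Λ →* K_Λ` to `⊕_H Λ →* ∏_H K_Λ`. -/
def toPiMap {Λ : Type v} {K_Λ : Type w} [Group Λ] [Group K_Λ] (H : Type u) (βΛ : Λ →* K_Λ) :
    restrictedProduct H Λ →* (H → K_Λ) where
  toFun f := fun h' => βΛ ((f : H → Λ) h')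
  map_one' := by funext h'; simp
  map_mul' a b := by funext h'; simp

/-- The topology on a semidirect product induced by the product topology. -/
instance SemidirectProduct.instTopSpace {N' : Type u} {H' : Type v} [Group N'] [Group H']
    [TopologicalSpace N'] [TopologicalSpace H'] {φ : H' →* MulAut N'} :
    TopologicalSpace (N' ⋊[φ] H') :=
  TopologicalSpace.induced (fun g => (g.left, g.right)) instTopologicalSpaceProd

/-- The canonical map `Λ ≀ H →* (∏_{h ∈ H} K_Λ) ⋊ K_H`, `(f, h) ↦ ((βΛ (f h'))_{h'}, βH h)`,
where `K_H` acts by permuting the coordinates through the isomorphism `e` (that is, `βH`). -/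
def wreathCompactMap {Λ : Type v} {H : Type u} {K_Λ : Type w} {K_H : Type u}
    [Group Λ] [Group H] [Group K_Λ] [Group K_H]
    (βΛ : Λ →* K_Λ) (βH : H →* K_H) (e : H ≃* K_H) (he : ∀ h : H, e h = βH h) :
    Wreath Λ H →* (H → K_Λ) ⋊[(permAut K_Λ H).comp e.symm.toMonoidHom] K_H :=
  SemidirectProduct.map (toPiMap H βΛ) βH (by
    intro h
    refine DFunLike.ext _ _ fun f => funext fun h' => ?_
    show βΛ ((f : H → Λ) (h⁻¹ * h')) = βΛ ((f : H → Λ) ((e.symm (βH h))⁻¹ * h'))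
    rw [← he, MulEquiv.symm_apply_apply])

/-!
Since `H` is finite, `Λ ≀ H` is `Λ^H ⋊ H` and `K_H ≅ H` is discrete. Let `α` be a homomorphism
from `Λ ≀ H` to a compact group `L`. On each coordinate copy of `Λ` it extends continuously
over `K_Λ`; distinct coordinates commute in `Λ ≀ H`, so by density the extensions commute too,
and their product is a continuous homomorphism `K_Λ^H → L`. Equivariance under `H` passes to the
closure in the same way, so this homomorphism and `α` restricted to `H` glue to a continuous
homomorphism on `K_Λ^H ⋊ K_H` extending `α`.

The universal property of `K_Λ` only speaks about targets in one universe. Because `Λ` is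
countable, the closure of its image in a Hausdorff group is small, so every target can be
replaced by a copy in that universe.
-/

open Set Topology SemidirectProduct

universe w₁

theorem Set.Countable.small_closure {X : Type*} [TopologicalSpace X] [T2Space X] {s : Set X}
    (hs : s.Countable) : Small.{w} (closure s) := by
  have : Countable s := hs.to_subtype
  refine small_of_injective
    (f := fun x : closure s => {t : Set s | (x : X) ∈ closure (Subtype.val '' t)}) ?_
  intro x y hxy
  by_contra hne
  obtain ⟨U, V, hU, hV, hxU, hyV, hUV⟩ := t2_separation (Subtype.coe_injective.ne hne)
  have hx : (x : X) ∈ closure (Subtype.val '' (Subtype.val ⁻¹' U : Set s)) := by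
    rw [Subtype.image_preimage_coe, inter_comm]
    exact hU.inter_closure ⟨hxU, x.2⟩
  have hy : (y : X) ∉ closure (Subtype.val '' (Subtype.val ⁻¹' U : Set s)) := fun hy =>
    (hUV.closure_left hV).notMem_of_mem_right hyV (closure_mono (image_preimage_subset _ _) hy)
  exact hy ((Set.ext_iff.1 hxy _).1 hx)

noncomputable def Shrink.continuousMulEquiv (X : Type*) [Group X] [TopologicalSpace X]
    [Small.{w} X] : Shrink.{w} X ≃ₜ* X where
  toMulEquiv := Shrink.mulEquiv
  continuous_toFun := (Shrink.homeomorph X).symm.continuous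
  continuous_invFun := (Shrink.homeomorph X).continuous

theorem MonoidHom.exists_small_factorization {G L : Type*} [Group G] [Countable G]
    [TopologicalSpace G] [Group L] [TopologicalSpace L] [IsTopologicalGroup L] [CompactSpace L]
    [T2Space L] (γ : G →* L) (hγ : Continuous γ) :
    ∃ (M : Type w) (_ : Group M) (_ : TopologicalSpace M) (_ : IsTopologicalGroup M)
      (_ : CompactSpace M) (_ : T2Space M) (ι : M →* L) (γ₀ : G →* M),
      IsEmbedding ι ∧ Continuous γ₀ ∧ γ = ι.comp γ₀ := by
  let L₀ := γ.range.topologicalClosure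
  have : Small.{w} L₀ := (countable_range γ).small_closure
  have : CompactSpace L₀ :=
    isCompact_iff_compactSpace.mp γ.range.isClosed_topologicalClosure.isCompact
  let e := Shrink.continuousMulEquiv.{w} L₀
  have hγL₀ : ∀ x, γ x ∈ L₀ := fun x => γ.range.le_topologicalClosure ⟨x, rfl⟩
  refine ⟨Shrink.{w} L₀, _, _, e.isTopologicalGroup, e.toHomeomorph.symm.compactSpace,
    e.toHomeomorph.symm.t2Space, L₀.subtype.comp e.toMonoidHom,
    e.symm.toMonoidHom.comp (γ.codRestrict L₀ hγL₀), IsEmbedding.subtypeVal.comp e.isEmbedding,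
    e.symm.continuous.comp (hγ.codRestrict hγL₀), ?_⟩
  ext x
  exact congrArg Subtype.val (e.apply_symm_apply ⟨γ x, hγL₀ x⟩).symm

theorem IsBohrCompactification.transfer_universe {G : Type u} [Group G] [Countable G]
    [TopologicalSpace G] {K : Type v} [Group K] [TopologicalSpace K] {β : G →* K}
    (h : IsBohrCompactification.{u, v, w} G K β) : IsBohrCompactification.{u, v, w₁} G K β := by
  obtain ⟨hK, hcpt, ht2, hβ, hdense, hlift⟩ := h
  refine ⟨hK, hcpt, ht2, hβ, hdense, fun L _ _ _ _ _ γ hγ => ?_⟩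
  obtain ⟨M, _, _, _, _, _, ι, γ₀, hι, hγ₀, rfl⟩ := γ.exists_small_factorization.{w} hγ
  obtain ⟨ψ, hψ, rfl⟩ := hlift M γ₀ hγ₀
  exact ⟨ι.comp ψ, hι.continuous.comp hψ, rfl⟩

theorem IsProfiniteCompletion.transfer_universe {G : Type u} [Group G] [Countable G]
    [TopologicalSpace G] {K : Type v} [Group K] [TopologicalSpace K] {β : G →* K}
    (h : IsProfiniteCompletion.{u, v, w} G K β) : IsProfiniteCompletion.{u, v, w₁} G K β := by
  obtain ⟨hK, hcpt, ht2, htd, hβ, hdense, hlift⟩ := h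
  refine ⟨hK, hcpt, ht2, htd, hβ, hdense, fun L _ _ _ _ _ _ γ hγ => ?_⟩
  obtain ⟨M, _, _, _, _, _, ι, γ₀, hι, hγ₀, rfl⟩ := γ.exists_small_factorization.{w} hγ
  have : TotallyDisconnectedSpace M :=
    hι.isTotallyDisconnected_range.mp (isTotallyDisconnected_of_totallyDisconnectedSpace _)
  obtain ⟨ψ, hψ, rfl⟩ := hlift M γ₀ hγ₀
  exact ⟨ι.comp ψ, hι.continuous.comp hψ, rfl⟩

namespace SemidirectProduct

variable {N G : Type*} [Group N] [Group G] [TopologicalSpace N] [TopologicalSpace G]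
  {φ : G →* MulAut N}

def homeomorphProd : N ⋊[φ] G ≃ₜ N × G where
  toEquiv := equivProd
  continuous_toFun := continuous_induced_dom
  continuous_invFun := continuous_induced_rng.2 continuous_id

@[fun_prop]
theorem continuous_left : Continuous fun g : N ⋊[φ] G => g.left :=
  continuous_fst.comp homeomorphProd.continuous

@[fun_prop]
theorem continuous_right : Continuous fun g : N ⋊[φ] G => g.right :=
  continuous_snd.comp homeomorphProd.continuous

theorem continuous_iff {X : Type*} [TopologicalSpace X] {f : X → N ⋊[φ] G} :
    Continuous f ↔ Continuous (fun x => (f x).left) ∧ Continuous (fun x => (f x).right) :=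
  continuous_induced_rng.trans continuous_prodMk

instance [CompactSpace N] [CompactSpace G] : CompactSpace (N ⋊[φ] G) :=
  homeomorphProd.symm.compactSpace

instance [T2Space N] [T2Space G] : T2Space (N ⋊[φ] G) :=
  homeomorphProd.symm.t2Space

instance [TotallyDisconnectedSpace N] [TotallyDisconnectedSpace G] :
    TotallyDisconnectedSpace (N ⋊[φ] G) :=
  homeomorphProd.isEmbedding.isTotallyDisconnected_range.mp
    (isTotallyDisconnected_of_totallyDisconnectedSpace _)

theorem isTopologicalGroup [IsTopologicalGroup N] [IsTopologicalGroup G]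
    (hφ : Continuous fun p : G × N => φ p.1 p.2) : IsTopologicalGroup (N ⋊[φ] G) where
  continuous_mul := continuous_iff.2
    ⟨(continuous_left.comp continuous_fst).mul
      (hφ.comp ((continuous_right.comp continuous_fst).prodMk
        (continuous_left.comp continuous_snd))),
      (continuous_right.comp continuous_fst).mul (continuous_right.comp continuous_snd)⟩
  continuous_inv := continuous_iff.2
    ⟨hφ.comp (continuous_right.inv.prodMk continuous_left.inv), continuous_right.inv⟩

variable {N₁ G₁ : Type*} [Group N₁] [Group G₁] {φ₁ : G₁ →* MulAut N₁}

theorem denseRange_map {fn : N₁ →* N} {fg : G₁ →* G}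
    {h : ∀ g, fn.comp (φ₁ g).toMonoidHom = (φ (fg g)).toMonoidHom.comp fn}
    (hfn : DenseRange fn) (hfg : DenseRange fg) : DenseRange (map fn fg h) := by
  have : ⇑(map fn fg h) = (homeomorphProd.symm ∘ Prod.map fn fg) ∘ equivProd := rfl
  rw [this, DenseRange, equivProd.surjective.range_comp]
  exact homeomorphProd.symm.surjective.denseRange.comp (hfn.prodMap hfg)
    homeomorphProd.symm.continuous

theorem exists_lift_comp_map {L : Type*} [Group L] [TopologicalSpace L] [IsTopologicalGroup L]
    [T2Space L] (fn : N₁ →* N) (fg : G₁ →* G)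
    (h : ∀ g, fn.comp (φ₁ g).toMonoidHom = (φ (fg g)).toMonoidHom.comp fn)
    (hfn : DenseRange fn) (hfg : DenseRange fg) (hφ : Continuous fun p : G × N => φ p.1 p.2)
    (α : N₁ ⋊[φ₁] G₁ →* L) (αN : N →* L) (αG : G →* L) (hαN : Continuous αN)
    (hαG : Continuous αG) (hN : α.comp inl = αN.comp fn) (hG : α.comp inr = αG.comp fg) :
    ∃ α' : N ⋊[φ] G →* L, Continuous α' ∧ α = α'.comp (map fn fg h) := by
  have equivariant : (fun p : G × N => αN (φ p.1 p.2)) =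
      fun p => αG p.1 * αN p.2 * (αG p.1)⁻¹ := by
    refine (hfg.prodMap hfn).equalizer (hαN.comp hφ) (by fun_prop) (funext fun ⟨g, n⟩ => ?_)
    have hn (x : N₁) : α (inl x) = αN (fn x) := DFunLike.congr_fun hN x
    have hg (x : G₁) : α (inr x) = αG (fg x) := DFunLike.congr_fun hG x
    have hact : φ (fg g) (fn n) = fn (φ₁ g n) := (DFunLike.congr_fun (h g) n).symm
    change αN (φ (fg g) (fn n)) = αG (fg g) * αN (fn n) * (αG (fg g))⁻¹
    rw [hact, ← hn, ← hn, ← hg, inl_aut, map_mul, map_mul, map_inv, map_inv]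
  refine ⟨lift αN αG fun k => MonoidHom.ext fun n => congrFun equivariant (k, n), ?_, ?_⟩
  · exact (hαN.comp continuous_left).mul (hαG.comp continuous_right)
  · refine hom_ext ?_ ?_
    · rw [MonoidHom.comp_assoc, map_comp_inl, ← MonoidHom.comp_assoc, lift_comp_inl, hN]
    · rw [MonoidHom.comp_assoc, map_comp_inr, ← MonoidHom.comp_assoc, lift_comp_inr, hG]

end SemidirectProduct

theorem Continuous.finset_noncommProd {ι X M : Type*} [TopologicalSpace X] [TopologicalSpace M]
    [Monoid M] [ContinuousMul M] (s : Finset ι) {f : ι → X → M}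
    (hf : ∀ i ∈ s, Continuous (f i))
    (comm : ∀ x, (s : Set ι).Pairwise fun i j => Commute (f i x) (f j x)) :
    Continuous fun x => s.noncommProd (fun i => f i x) (comm x) := by
  induction s using Finset.cons_induction with
  | empty => simpa using continuous_const
  | cons a s ha ih =>
    simp only [Finset.noncommProd_cons]
    exact (hf a (Finset.mem_cons_self a s)).mul
      (ih (fun i hi => hf i (Finset.mem_cons_of_mem hi))
        fun x => (comm x).mono (by simp))

theorem MonoidHom.exists_continuous_pi_lift {ι Λ K L : Type*} [Finite ι] [Monoid Λ] [Monoid K]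
    [Monoid L] [TopologicalSpace Λ] [TopologicalSpace K] [TopologicalSpace L] [ContinuousMul L]
    [T2Space L] {β : Λ →* K} (hβ : DenseRange β)
    (hlift : ∀ γ : Λ →* L, Continuous γ → ∃ γ' : K →* L, Continuous γ' ∧ γ = γ'.comp β)
    (ψ : (ι → Λ) →* L) (hψ : Continuous ψ) :
    ∃ ψ' : (ι → K) →* L, Continuous ψ' ∧ ψ = ψ'.comp (β.compLeft ι) := by
  classical
  cases nonempty_fintype ι
  choose A hA hψA using fun i =>
    hlift (ψ.comp (MonoidHom.mulSingle (fun _ => Λ) i))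
      (hψ.comp (continuous_mulSingle (A := fun _ => Λ) i))
  have hψβ (i : ι) (x : Λ) : ψ (Pi.mulSingle i x) = A i (β x) := DFunLike.congr_fun (hψA i) x
  have comm : Pairwise fun i j => ∀ x y, Commute (A i x) (A j y) := by
    intro i j hij
    have on_range : (fun p : Λ × Λ => A i (β p.1) * A j (β p.2)) =
        fun p => A j (β p.2) * A i (β p.1) := funext fun ⟨x, y⟩ => by
      rw [← hψβ, ← hψβ]
      exact ((Pi.mulSingle_commute hij x y).map ψ).eq
    have := (hβ.prodMap hβ).equalizer (g := fun p => A i p.1 * A j p.2)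
      (h := fun p => A j p.2 * A i p.1) (by fun_prop) (by fun_prop) on_range
    exact fun x y => congrFun this (x, y)
  refine ⟨MonoidHom.noncommPiCoprod A comm,
    Continuous.finset_noncommProd (f := fun i (F : ι → K) => A i (F i)) _
      (fun i _ => (hA i).comp (continuous_apply i)) fun _ _ _ _ _ hij => comm hij _ _, ?_⟩
  refine MonoidHom.pi_ext fun i x => ?_
  have : β.compLeft ι (Pi.mulSingle i x) = Pi.mulSingle i (β x) :=
    funext (Pi.apply_mulSingle (fun _ => β) (fun _ => map_one β) i x)
  rw [MonoidHom.comp_apply, this, MonoidHom.noncommPiCoprod_mulSingle, hψβ]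

section Wreath

variable {Λ H : Type u} [Group Λ]

theorem denseRange_toPiMap [Finite H] {K : Type*} [Group K] [TopologicalSpace K] {β : Λ →* K}
    (hβ : DenseRange β) : DenseRange (toPiMap H β) := by
  have hval : Function.Surjective (Subtype.val : restrictedProduct H Λ → H → Λ) :=
    fun f => ⟨⟨f, Set.toFinite _⟩, rfl⟩
  have : ⇑(toPiMap H β) = β.compLeft H ∘ Subtype.val := rfl
  rw [this, DenseRange, hval.range_comp]
  exact DenseRange.piMap fun _ => hβ

variable [Group H]

theorem continuous_permAut_uncurry {K G : Type*} [Group K] [TopologicalSpace K] [Group G]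
    [TopologicalSpace G] [DiscreteTopology G] (ρ : G →* H) :
    Continuous fun p : G × (H → K) => ((permAut K H).comp ρ) p.1 p.2 :=
  continuous_prod_of_discrete_left.2 fun g =>
    continuous_pi fun h => continuous_apply ((ρ g)⁻¹ * h)

variable [Finite H] {K_Λ : Type*} {K_H : Type u} [Group K_Λ] [TopologicalSpace K_Λ] [Group K_H]
  [TopologicalSpace K_H] {βΛ : Λ →* K_Λ} {βH : H →* K_H}

theorem denseRange_wreathCompactMap (e : H ≃* K_H) (he : ∀ h, e h = βH h)
    (hβΛ : DenseRange βΛ) : DenseRange (wreathCompactMap βΛ βH e he) :=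
  SemidirectProduct.denseRange_map (denseRange_toPiMap hβΛ)
    (funext he ▸ e.surjective).denseRange

theorem exists_lift_comp_wreathCompactMap [TopologicalSpace Λ] [DiscreteTopology Λ]
    [T2Space K_H] (e : H ≃* K_H) (he : ∀ h, e h = βH h) (hβΛ : DenseRange βΛ) {L : Type*}
    [Group L] [TopologicalSpace L] [IsTopologicalGroup L] [T2Space L]
    (hlift : ∀ γ : Λ →* L, Continuous γ → ∃ γ' : K_Λ →* L, Continuous γ' ∧ γ = γ'.comp βΛ)
    (α : Wreath Λ H →* L) :
    ∃ α' : (H → K_Λ) ⋊[(permAut K_Λ H).comp e.symm.toMonoidHom] K_H →* L,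
      Continuous α' ∧ α = α'.comp (wreathCompactMap βΛ βH e he) := by
  have : Finite K_H := .of_equiv H e.toEquiv
  let ofPi : (H → Λ) →* restrictedProduct H Λ :=
    (MonoidHom.id _).codRestrict _ fun _ => Set.toFinite _
  obtain ⟨αN, hαN, hαN_comp⟩ := MonoidHom.exists_continuous_pi_lift hβΛ hlift
    ((α.comp inl).comp ofPi) continuous_of_discreteTopology
  refine SemidirectProduct.exists_lift_comp_map _ _ _ (denseRange_toPiMap hβΛ)
    (funext he ▸ e.surjective).denseRange
    (continuous_permAut_uncurry _) α αN ((α.comp inr).comp e.symm.toMonoidHom) hαN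
    continuous_of_discreteTopology (MonoidHom.ext fun f => DFunLike.congr_fun hαN_comp f.1)
    (MonoidHom.ext fun h => ?_)
  change α (inr h) = α (inr (e.symm (βH h)))
  rw [← he, e.symm_apply_apply]

end Wreath

section WreathCompletion

variable {Λ H : Type u} [Group Λ] [Group H] [Finite H] [TopologicalSpace Λ] [DiscreteTopology Λ]
  {K_Λ : Type v} {K_H : Type u} [Group K_Λ] [TopologicalSpace K_Λ] [Group K_H]
  [TopologicalSpace K_H] [T2Space K_H] {βΛ : Λ →* K_Λ} {βH : H →* K_H}

theorem isBohrCompactification_wreathCompactMap (e : H ≃* K_H) (he : ∀ h, e h = βH h)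
    (hΛ : IsBohrCompactification.{u, v, w} Λ K_Λ βΛ) :
    IsBohrCompactification.{u, max u v, w} (Wreath Λ H)
      ((H → K_Λ) ⋊[(permAut K_Λ H).comp e.symm.toMonoidHom] K_H)
      (wreathCompactMap βΛ βH e he) := by
  obtain ⟨_, _, _, -, hβΛ, hlift⟩ := hΛ
  have : Finite K_H := .of_equiv H e.toEquiv
  exact ⟨SemidirectProduct.isTopologicalGroup (continuous_permAut_uncurry _), inferInstance,
    inferInstance, continuous_of_discreteTopology, denseRange_wreathCompactMap e he hβΛ,
    fun L _ _ _ _ _ α _ => exists_lift_comp_wreathCompactMap e he hβΛ (hlift L) α⟩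

theorem isProfiniteCompletion_wreathCompactMap (e : H ≃* K_H) (he : ∀ h, e h = βH h)
    (hΛ : IsProfiniteCompletion.{u, v, w} Λ K_Λ βΛ) :
    IsProfiniteCompletion.{u, max u v, w} (Wreath Λ H)
      ((H → K_Λ) ⋊[(permAut K_Λ H).comp e.symm.toMonoidHom] K_H)
      (wreathCompactMap βΛ βH e he) := by
  obtain ⟨_, _, _, _, -, hβΛ, hlift⟩ := hΛ
  have : Finite K_H := .of_equiv H e.toEquiv
  exact ⟨SemidirectProduct.isTopologicalGroup (continuous_permAut_uncurry _), inferInstance,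
    inferInstance, inferInstance, continuous_of_discreteTopology,
    denseRange_wreathCompactMap e he hβΛ,
    fun L _ _ _ _ _ _ α _ => exists_lift_comp_wreathCompactMap e he hβΛ (hlift L) α⟩

end WreathCompletion

theorem wreath_bohr_prof_of_finite_general
    (Λ : Type u) (H : Type u) [Group Λ] [Group H] [Countable Λ] [Finite H]
    [TopologicalSpace Λ] [DiscreteTopology Λ] [TopologicalSpace H]
    (K_Λ : Type u) [Group K_Λ] [TopologicalSpace K_Λ] (βΛ : Λ →* K_Λ)
    (K_H : Type u) [Group K_H] [TopologicalSpace K_H] (βH : H →* K_H)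
    (e : H ≃* K_H) (he : ∀ h : H, e h = βH h)
    (P_Λ : Type u) [Group P_Λ] [TopologicalSpace P_Λ] (αΛ : Λ →* P_Λ)
    (P_H : Type u) [Group P_H] [TopologicalSpace P_H] (αH : H →* P_H)
    (e' : H ≃* P_H) (he' : ∀ h : H, e' h = αH h) :
    (IsBohrCompactification Λ K_Λ βΛ → IsBohrCompactification H K_H βH →
      IsBohrCompactification (Wreath Λ H)
        ((H → K_Λ) ⋊[(permAut K_Λ H).comp e.symm.toMonoidHom] K_H)
        (wreathCompactMap βΛ βH e he)) ∧
      (IsProfiniteCompletion Λ P_Λ αΛ → IsProfiniteCompletion H P_H αH →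
        IsProfiniteCompletion (Wreath Λ H)
          ((H → P_Λ) ⋊[(permAut P_Λ H).comp e'.symm.toMonoidHom] P_H)
          (wreathCompactMap αΛ αH e' he')) := by
  refine ⟨fun hΛ hH => ?_, fun hΛ hH => ?_⟩
  · have : T2Space K_H := hH.2.2.1
    exact isBohrCompactification_wreathCompactMap e he hΛ.transfer_universe
  · have : T2Space P_H := hH.2.2.1
    exact isProfiniteCompletion_wreathCompactMap e' he' hΛ.transfer_universe

theorem wreath_bohr_prof_of_finite
    (Λ : Type u) (H : Type u) [Group Λ] [Group H] [Countable Λ] [Finite H]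
    [TopologicalSpace Λ] [DiscreteTopology Λ] [TopologicalSpace H] [DiscreteTopology H]
    (K_Λ : Type u) [Group K_Λ] [TopologicalSpace K_Λ] (βΛ : Λ →* K_Λ)
    (K_H : Type u) [Group K_H] [TopologicalSpace K_H] (βH : H →* K_H)
    (e : H ≃* K_H) (he : ∀ h : H, e h = βH h)
    (P_Λ : Type u) [Group P_Λ] [TopologicalSpace P_Λ] (αΛ : Λ →* P_Λ)
    (P_H : Type u) [Group P_H] [TopologicalSpace P_H] (αH : H →* P_H)
    (e' : H ≃* P_H) (he' : ∀ h : H, e' h = αH h) :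
    (IsBohrCompactification Λ K_Λ βΛ → IsBohrCompactification H K_H βH →
      IsBohrCompactification (Wreath Λ H)
        ((H → K_Λ) ⋊[(permAut K_Λ H).comp e.symm.toMonoidHom] K_H)
        (wreathCompactMap βΛ βH e he)) ∧
      (IsProfiniteCompletion Λ P_Λ αΛ → IsProfiniteCompletion H P_H αH →
        IsProfiniteCompletion (Wreath Λ H)
          ((H → P_Λ) ⋊[(permAut P_Λ H).comp e'.symm.toMonoidHom] P_H)
          (wreathCompactMap αΛ αH e' he')) :=
  wreath_bohr_prof_of_finite_general Λ H K_Λ βΛ K_H βH e he P_Λ αΛ P_H αH e' he'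
end

section
/- Let G be a topological group, N a closed normal subgroup of G, and (K, α) a profinite completion of G. Let M be the closure of α(N) in K (a closed normal subgroup of K). Then the quotient K/M, together with the continuous homomorphism G/N → K/M induced by α, is a profinite completion of the quotient group G/N. In particular, the induced homomorphism Prof(G) → Prof(G/N) is surjective with kernel the closure of α(N). -/
universe u v w

/-! The closure `M` of `α(N)` is normalised by the dense subgroup `α(G)`, hence normal, and
`K ⧸ M` is again profinite. A continuous `γ : G ⧸ N →* L` into a profinite group lifts, as
`G → G ⧸ N → L`, along `α` to some `γ' : K →* L`; then `γ'` kills `α(N)`, hence its closure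
`M`, and descends to `K ⧸ M`.

The universal property of `K` is only assumed for targets in one universe. It transfers to an
arbitrary profinite `L` because the finite quotients `L ⧸ U` are small and `L` embeds as a closed
subgroup in `Π U, L ⧸ U`: lifts exist for products, and restrict to closed subgroups since `α`
has dense range. -/

open Topology

theorem Subgroup.normal_topologicalClosure_map {G K : Type*} [Group G] [Group K]
    [TopologicalSpace K] [IsTopologicalGroup K] {α : G →* K} (hα : DenseRange α)
    (N : Subgroup G) [hN : N.Normal] : (N.map α).topologicalClosure.Normal where
  conj_mem m hm k := by
    refine hα.induction_on (p := fun k => k * m * k⁻¹ ∈ (N.map α).topologicalClosure) k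
      (isClosed_closure.preimage (by fun_prop)) fun g => ?_
    refine map_mem_closure (f := fun x => α g * x * (α g)⁻¹)
      (IsTopologicalGroup.continuous_conj _) hm ?_
    rintro - ⟨n, hn, rfl⟩
    exact ⟨g * n * g⁻¹, hN.conj_mem n hn g, by simp⟩

theorem NonarchimedeanGroup.of_totallyDisconnectedSpace (G : Type*) [Group G]
    [TopologicalSpace G] [IsTopologicalGroup G] [CompactSpace G] [TotallyDisconnectedSpace G] :
    NonarchimedeanGroup G where
  is_nonarchimedean U hU := by
    obtain ⟨V, hVU, hV, h1V⟩ := mem_nhds_iff.mp hU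
    obtain ⟨H, hH⟩ := ProfiniteGrp.exist_openNormalSubgroup_sub_open_nhds_of_one hV h1V
    exact ⟨H.toOpenSubgroup, hH.trans hVU⟩

instance QuotientGroup.instNonarchimedeanGroup {G : Type*} [Group G] [TopologicalSpace G]
    [NonarchimedeanGroup G] (N : Subgroup G) [N.Normal] : NonarchimedeanGroup (G ⧸ N) where
  is_nonarchimedean U hU := by
    obtain ⟨V, hV⟩ := NonarchimedeanGroup.is_nonarchimedean _
      (QuotientGroup.continuous_mk.tendsto (1 : G) hU)
    exact ⟨⟨V.map (QuotientGroup.mk' N), QuotientGroup.isOpenMap_coe _ V.isOpen⟩,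
      by rintro - ⟨g, hg, rfl⟩; exact hV hg⟩

theorem QuotientGroup.continuous_map {G K : Type*} [Group G] [TopologicalSpace G] [Group K]
    [TopologicalSpace K] (N : Subgroup G) [N.Normal] (M : Subgroup K) [M.Normal] (α : G →* K)
    (h : N ≤ M.comap α) (hα : Continuous α) : Continuous (QuotientGroup.map N M α h) :=
  (QuotientGroup.isQuotientMap_mk N).continuous_iff.mpr (QuotientGroup.continuous_mk.comp hα)

theorem QuotientGroup.denseRange_map {G K : Type*} [Group G] [Group K]
    [TopologicalSpace K] (N : Subgroup G) [N.Normal] (M : Subgroup K) [M.Normal] (α : G →* K)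
    (h : N ≤ M.comap α) (hα : DenseRange α) : DenseRange (QuotientGroup.map N M α h) :=
  DenseRange.of_comp (g := ((↑) : G → G ⧸ N))
    (QuotientGroup.mk_surjective.denseRange.comp hα QuotientGroup.continuous_mk)

theorem isClosedEmbedding_pi_quotient_openNormalSubgroup (L : Type*) [Group L]
    [TopologicalSpace L] [IsTopologicalGroup L] [CompactSpace L] [TotallyDisconnectedSpace L] :
    IsClosedEmbedding (MonoidHom.pi fun U : OpenNormalSubgroup L => QuotientGroup.mk' U.toSubgroup :
      L →* Π U : OpenNormalSubgroup L, L ⧸ U.toSubgroup) := by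
  have : ∀ U : OpenNormalSubgroup L, DiscreteTopology (L ⧸ U.toSubgroup) :=
    fun U => QuotientGroup.discreteTopology U.isOpen'
  refine Continuous.isClosedEmbedding (continuous_pi fun U => QuotientGroup.continuous_mk)
    ((injective_iff_map_eq_one _).mpr fun l hl => ?_)
  by_contra hne
  obtain ⟨U, hU⟩ := ProfiniteGrp.exist_openNormalSubgroup_sub_open_nhds_of_one
    isOpen_compl_singleton (Ne.symm hne)
  exact hU ((QuotientGroup.eq_one_iff l).mp (congrFun hl U)) rfl

section ContinuousLifts

variable {G : Type*} [Group G] [TopologicalSpace G] {K : Type*} [Group K] [TopologicalSpace K]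

def HasContinuousLifts (α : G →* K) (L : Type*) [Group L] [TopologicalSpace L] : Prop :=
  ∀ γ : G →* L, Continuous γ → ∃ γ' : K →* L, Continuous γ' ∧ γ = γ'.comp α

variable {α : G →* K}

theorem HasContinuousLifts.of_continuousMulEquiv {L L' : Type*} [Group L] [TopologicalSpace L]
    [Group L'] [TopologicalSpace L'] (h : HasContinuousLifts α L) (e : L ≃ₜ* L') :
    HasContinuousLifts α L' := by
  intro γ hγ
  obtain ⟨γ', hγ'_cont, hγ'⟩ :=
    h ((e.symm : L' →* L).comp γ) (e.symm.continuous.comp hγ)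
  refine ⟨(e : L →* L').comp γ', e.continuous.comp hγ'_cont, ?_⟩
  ext g
  simpa using congrArg e (DFunLike.congr_fun hγ' g)

theorem HasContinuousLifts.pi {ι : Type*} {L : ι → Type*} [∀ i, Group (L i)]
    [∀ i, TopologicalSpace (L i)] (h : ∀ i, HasContinuousLifts α (L i)) :
    HasContinuousLifts α (Π i, L i) := by
  intro γ hγ
  choose γ' hγ'_cont hγ' using fun i =>
    h i ((Pi.evalMonoidHom L i).comp γ) ((continuous_apply i).comp hγ)
  refine ⟨MonoidHom.pi γ', continuous_pi hγ'_cont, ?_⟩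
  ext g i
  exact DFunLike.congr_fun (hγ' i) g

theorem HasContinuousLifts.of_isClosedEmbedding {L P : Type*} [Group L] [TopologicalSpace L]
    [Group P] [TopologicalSpace P] (h : HasContinuousLifts α P) (hα : DenseRange α) (ι : L →* P)
    (hι : IsClosedEmbedding ι) : HasContinuousLifts α L := by
  intro γ hγ
  obtain ⟨Ψ, hΨ_cont, hΨ⟩ := h (ι.comp γ) (hι.continuous.comp hγ)
  have hrange : ∀ k, Ψ k ∈ ι.range := fun k =>
    hα.induction_on k (hι.isClosed_range.preimage hΨ_cont) fun g =>
      ⟨γ g, DFunLike.congr_fun hΨ g⟩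
  let e := MonoidHom.ofInjective hι.injective
  set γ' := (e.symm : ι.range →* L).comp (Ψ.codRestrict ι.range hrange)
  have hιγ' : ∀ k, ι (γ' k) = Ψ k := fun k =>
    congrArg Subtype.val (e.apply_symm_apply ⟨Ψ k, hrange k⟩)
  refine ⟨γ', ?_, ?_⟩
  · rw [hι.continuous_iff]
    exact (funext hιγ' : ⇑ι ∘ γ' = Ψ) ▸ hΨ_cont
  · ext g
    exact hι.injective ((DFunLike.congr_fun hΨ g).trans (hιγ' (α g)).symm)

theorem HasContinuousLifts.of_finite
    (h : ∀ (L : Type w) [Group L] [TopologicalSpace L] [IsTopologicalGroup L] [CompactSpace L]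
      [T2Space L] [TotallyDisconnectedSpace L], HasContinuousLifts α L)
    (F : Type*) [Group F] [TopologicalSpace F] [DiscreteTopology F] [Finite F] :
    HasContinuousLifts α F := by
  have : DiscreteTopology (Shrink.{w} F) :=
    (Shrink.homeomorph.{w} F).symm.isEmbedding.discreteTopology
  exact (h (Shrink.{w} F)).of_continuousMulEquiv
    { Shrink.mulEquiv with
      continuous_toFun := (Shrink.homeomorph.{w} F).symm.continuous
      continuous_invFun := (Shrink.homeomorph.{w} F).continuous }

theorem HasContinuousLifts.of_profinite (hα : DenseRange α)
    (h : ∀ (L : Type w) [Group L] [TopologicalSpace L] [IsTopologicalGroup L] [CompactSpace L]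
      [T2Space L] [TotallyDisconnectedSpace L], HasContinuousLifts α L)
    (L : Type*) [Group L] [TopologicalSpace L] [IsTopologicalGroup L] [CompactSpace L]
    [TotallyDisconnectedSpace L] : HasContinuousLifts α L :=
  have (U : OpenNormalSubgroup L) : DiscreteTopology (L ⧸ U.toSubgroup) :=
    QuotientGroup.discreteTopology U.isOpen'
  have (U : OpenNormalSubgroup L) : Finite (L ⧸ U.toSubgroup) :=
    Subgroup.quotient_finite_of_isOpen _ U.isOpen'
  (HasContinuousLifts.pi fun U => .of_finite h (L ⧸ U.toSubgroup)).of_isClosedEmbedding hα _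
    (isClosedEmbedding_pi_quotient_openNormalSubgroup L)

theorem HasContinuousLifts.quotientGroup_map [IsTopologicalGroup K] {L : Type*} [Group L]
    [TopologicalSpace L] [T1Space L] (h : HasContinuousLifts α L) (N : Subgroup G) [N.Normal]
    [(N.map α).topologicalClosure.Normal] :
    HasContinuousLifts (QuotientGroup.map N (N.map α).topologicalClosure α
      fun _ hn => Subgroup.le_topologicalClosure _ (Subgroup.mem_map_of_mem α hn)) L := by
  intro γ hγ
  obtain ⟨γ', hγ'_cont, hγ'⟩ :=
    h (γ.comp (QuotientGroup.mk' N)) (hγ.comp QuotientGroup.continuous_mk)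
  have hker : (N.map α).topologicalClosure ≤ γ'.ker := by
    refine Subgroup.topologicalClosure_minimal _ ?_ (isClosed_singleton.preimage hγ'_cont)
    rintro - ⟨n, hn, rfl⟩
    rw [MonoidHom.mem_ker, ← MonoidHom.comp_apply, ← hγ', MonoidHom.comp_apply,
      QuotientGroup.mk'_apply, (QuotientGroup.eq_one_iff n).mpr hn, map_one]
  refine ⟨QuotientGroup.lift _ γ' hker, ?_, ?_⟩
  · exact (QuotientGroup.isQuotientMap_mk _).continuous_iff.mpr hγ'_cont
  · ext g
    exact DFunLike.congr_fun hγ' g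

end ContinuousLifts

theorem profinite_completion_of_quotient_general
    {G : Type u} [Group G] [TopologicalSpace G]
    (K : Type v) [Group K] [TopologicalSpace K] [IsTopologicalGroup K] [CompactSpace K]
    [T2Space K] [TotallyDisconnectedSpace K]
    (α : G →* K) (hα : IsProfiniteCompletion G K α)
    (N : Subgroup G) [hN : N.Normal] :
    ∃ hM : ((N.map α).topologicalClosure).Normal,
      letI := hM
      IsProfiniteCompletion (G ⧸ N) (K ⧸ (N.map α).topologicalClosure)
        (QuotientGroup.map N ((N.map α).topologicalClosure) α
          (fun n hn => Subgroup.le_topologicalClosure _ (Subgroup.mem_map_of_mem α hn))) := by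
  obtain ⟨-, -, -, -, hα_cont, hα_dense, hα_lifts⟩ := hα
  have hM := Subgroup.normal_topologicalClosure_map hα_dense N
  -- instances making the quotient of `K` Hausdorff and nonarchimedean, hence totally disconnected
  have := Subgroup.isClosed_topologicalClosure (N.map α)
  have := NonarchimedeanGroup.of_totallyDisconnectedSpace K
  exact ⟨hM, inferInstance, inferInstance, inferInstance, inferInstance,
    QuotientGroup.continuous_map _ _ _ _ hα_cont, QuotientGroup.denseRange_map _ _ _ _ hα_dense,
    fun L _ _ _ _ _ _ => (HasContinuousLifts.of_profinite hα_dense hα_lifts L).quotientGroup_map N⟩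

theorem profinite_completion_of_quotient
    {G : Type u} [Group G] [TopologicalSpace G] [IsTopologicalGroup G]
    (K : Type v) [Group K] [TopologicalSpace K] [IsTopologicalGroup K] [CompactSpace K]
    [T2Space K] [TotallyDisconnectedSpace K]
    (α : G →* K) (hα : IsProfiniteCompletion G K α)
    (N : Subgroup G) [hN : N.Normal] :
    ∃ hM : ((N.map α).topologicalClosure).Normal,
      letI := hM
      IsProfiniteCompletion (G ⧸ N) (K ⧸ (N.map α).topologicalClosure)
        (QuotientGroup.map N ((N.map α).topologicalClosure) α
          (fun n hn => Subgroup.le_topologicalClosure _ (Subgroup.mem_map_of_mem α hn))) :=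
  profinite_completion_of_quotient_general K α hα N (hN := hN)
end
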